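/- Let (E, p) be a 𝒢-sheaf of 𝕜-modules over an ample groupoid 𝒢. Then the set Γ_c(E,p) of continuous compactly supported global sections s : 𝒢⁽⁰⁾ → E, with pointwise addition and the action (s·f)(x) = Σ_{d(g)=x} f(g)·(s(r(g))·g) for f ∈ 𝕜𝒢, is a unitary right 𝕜𝒢-module. -/

import Mathlib

open Set

structure TopGroupoid (Γ : Type) [TopologicalSpace Γ] where
  d : Γ → Γ
  r : Γ → Γ
  mul : Γ → Γ → Γ
  inv : Γ → Γ
  r_d : ∀ g, r (d g) = d g
  d_r : ∀ g, d (r g) = r g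
  d_mul : ∀ g h, d g = r h → d (mul g h) = d h
  r_mul : ∀ g h, d g = r h → r (mul g h) = r g
  mul_assoc : ∀ g h k, d g = r h → d h = r k → mul (mul g h) k = mul g (mul h k)
  mul_d : ∀ g, mul g (d g) = g
  r_mul_self : ∀ g, mul (r g) g = g
  d_inv : ∀ g, d (inv g) = r g
  r_inv : ∀ g, r (inv g) = d g
  mul_inv : ∀ g, mul g (inv g) = r g
  inv_mul : ∀ g, mul (inv g) g = d g
  continuous_d : Continuous d
  continuous_r : Continuous r
  continuous_inv : Continuous inv
  continuous_mul : ContinuousOn (fun p : Γ × Γ => mul p.1 p.2) {p | d p.1 = r p.2}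

namespace TopGroupoid

variable {Γ : Type} [TopologicalSpace Γ] (G : TopGroupoid Γ)

/-- The unit space, identified with its image in the arrow space. -/
def units : Set Γ := Set.range G.d

/-- `f` restricted to `U` is a homeomorphism onto its (open) image. -/
def IsPartialHomeoOn (f : Γ → Γ) (U : Set Γ) : Prop :=
  Set.InjOn f U ∧ IsOpen (f '' U) ∧ ∀ V, V ⊆ U → IsOpen V → IsOpen (f '' V)

/-- A local bisection: an open set on which both `d` and `r` restrict to
homeomorphisms onto their images. -/
def IsBisection (U : Set Γ) : Prop :=
  IsOpen U ∧ IsPartialHomeoOn G.d U ∧ IsPartialHomeoOn G.r U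

/-- The groupoid is étale: the domain map is a local homeomorphism. -/
def Etale : Prop := ∀ g : Γ, ∃ U, g ∈ U ∧ IsOpen U ∧ IsPartialHomeoOn G.d U

/-- Setwise product of subsets of the arrow space. -/
def bisMul (U V : Set Γ) : Set Γ :=
  {k | ∃ u ∈ U, ∃ v ∈ V, G.d u = G.r v ∧ k = G.mul u v}

/-- Setwise inverse. -/
def bisInv (U : Set Γ) : Set Γ := G.inv '' U

/-- Ample: étale, the unit space is Hausdorff and has a basis of compact open sets. -/
def Ample : Prop :=
  G.Etale ∧
    (∀ x y, x ∈ G.units → y ∈ G.units → x ≠ y →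
      ∃ U V : Set Γ, IsOpen U ∧ IsOpen V ∧ x ∈ U ∧ y ∈ V ∧ U ∩ V ∩ G.units = ∅) ∧
    ∀ x ∈ G.units, ∀ W : Set Γ, IsOpen W → x ∈ W →
      ∃ K : Set Γ, K ⊆ G.units ∧ x ∈ K ∧ K ⊆ W ∧ IsOpen K ∧ IsCompact K

/-- Convolution product of `𝕜`-valued functions on the arrow space. -/
noncomputable def conv {𝕜 : Type} [CommRing 𝕜] (f₁ f₂ : Γ → 𝕜) : Γ → 𝕜 :=
  fun g => ∑ᶠ h ∈ {h : Γ | G.d h = G.d g}, f₁ (G.mul g (G.inv h)) * f₂ h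

/-- Characteristic function of a set. -/
noncomputable def chi (𝕜 : Type) [CommRing 𝕜] (U : Set Γ) : Γ → 𝕜 :=
  Set.indicator U 1

/-- The groupoid algebra `𝕜𝒢`, as the span of characteristic functions of
compact open local bisections. -/
def grpAlg (𝕜 : Type) [CommRing 𝕜] : Submodule 𝕜 (Γ → 𝕜) :=
  Submodule.span 𝕜 {f | ∃ U : Set Γ, G.IsBisection U ∧ IsCompact U ∧ f = chi 𝕜 U}

end TopGroupoid
/-- A `𝒢`-sheaf of `𝕜`-modules: a local homeomorphism `p : E → 𝒢⁽⁰⁾` (encoded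
via its stalks, with `E = Σ x, stalk x` and `p = Sigma.fst`) together with a
`𝕜`-module structure on each stalk, continuous zero section, addition and scalar
multiplication, and a continuous right `𝒢`-action by `𝕜`-linear maps on stalks. -/
structure GSheafMod {Γ : Type} [TopologicalSpace Γ] (G : TopGroupoid Γ)
    (𝕜 : Type) [CommRing 𝕜] where
  stalk : Γ → Type
  addCommGroup : ∀ x, AddCommGroup (stalk x)
  module : ∀ x, Module 𝕜 (stalk x)
  topE : TopologicalSpace (Σ x, stalk x)
  trivial_off_units : ∀ x, x ∉ G.units → ∀ e : stalk x,
    e = @OfNat.ofNat _ 0 (@Zero.toOfNat0 _ (by exact (addCommGroup x).toZero))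
  continuous_proj : Continuous (Sigma.fst : (Σ x, stalk x) → Γ)
  etale_proj : ∀ e : Σ x, stalk x, ∃ U : Set (Σ x, stalk x), e ∈ U ∧ IsOpen U ∧
    Set.InjOn Sigma.fst U ∧ ∀ V, V ⊆ U → IsOpen V → IsOpen (Sigma.fst '' V)
  continuous_zero : ContinuousOn
    (fun x => (⟨x, @OfNat.ofNat _ 0 (@Zero.toOfNat0 _ (addCommGroup x).toZero)⟩ :
      Σ x, stalk x)) G.units
  continuous_add : Continuous
    (fun q : {q : (Σ x, stalk x) × (Σ x, stalk x) // q.1.1 = q.2.1} =>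
      (⟨q.1.1.1, @HAdd.hAdd _ _ _ (@instHAdd _ (addCommGroup q.1.1.1).toAdd)
        q.1.1.2 (cast (congrArg stalk q.2).symm q.1.2.2)⟩ : Σ x, stalk x))
  continuous_smul : ∀ c : 𝕜, Continuous
    (fun e : Σ x, stalk x =>
      (⟨e.1, @HSMul.hSMul 𝕜 _ _ (@instHSMul _ _ (module e.1).toSMul) c e.2⟩ :
        Σ x, stalk x))
  act : ∀ g : Γ, stalk (G.r g) → stalk (G.d g)
  act_add : ∀ g a b, act g (@HAdd.hAdd _ _ _
      (@instHAdd _ (addCommGroup (G.r g)).toAdd) a b)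
    = @HAdd.hAdd _ _ _ (@instHAdd _ (addCommGroup (G.d g)).toAdd) (act g a) (act g b)
  act_smul : ∀ g (c : 𝕜) a, act g (@HSMul.hSMul 𝕜 _ _
      (@instHSMul _ _ (module (G.r g)).toSMul) c a)
    = @HSMul.hSMul 𝕜 _ _ (@instHSMul _ _ (module (G.d g)).toSMul) c (act g a)
  act_unit : ∀ x, x ∈ G.units → ∀ a : stalk (G.r x), HEq (act x a) a
  act_comp : ∀ g h (w : G.d g = G.r h) (a : stalk (G.r g)),
    HEq (act h (cast (congrArg stalk w) (act g a)))
      (act (G.mul g h) (cast (congrArg stalk (G.r_mul g h w)).symm a))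
  continuous_act : Continuous
    (fun q : {q : (Σ x, stalk x) × Γ // q.1.1 = G.r q.2} =>
      (⟨G.d q.1.2, act q.1.2 (cast (congrArg stalk q.2) q.1.1.2)⟩ : Σ x, stalk x))

attribute [instance] GSheafMod.addCommGroup GSheafMod.module GSheafMod.topE

namespace GSheafMod

variable {Γ : Type} [TopologicalSpace Γ] {G : TopGroupoid Γ}
  {𝕜 : Type} [CommRing 𝕜] (F : GSheafMod G 𝕜)

/-- Compactly supported continuous global sections. -/
def Γc : Set (∀ x, F.stalk x) :=
  {s | (∀ x, x ∉ G.units → s x = 0) ∧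
    ContinuousOn (fun x => (⟨x, s x⟩ : Σ x, F.stalk x)) G.units ∧
    ∃ K : Set Γ, IsCompact K ∧ ∀ x, s x ≠ 0 → x ∈ K}

/-- The right action of a function `f : Γ → 𝕜` on a section:
`(s·f)(x) = Σ_{d(g)=x} f(g) • (s(r(g))·g)`. -/
noncomputable def actSec (s : ∀ x, F.stalk x) (f : Γ → 𝕜) : ∀ x, F.stalk x :=
  fun x => ∑ᶠ g : {g : Γ // G.d g = x},
    f g.1 • cast (congrArg F.stalk g.2) (F.act g.1 (s (G.r g.1)))

end GSheafMod

/-!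
On a compact open bisection `U`, the section `s·χ_U` is given over the open set `d(U)` by
`x ↦ s(r(σ x))·σ x`, with `σ` the inverse of `d` on `U`, and vanishes on the rest of the unit
space; as `d(U)` is compact in the Hausdorff unit space, both pieces are relatively open, so
`s·χ_U ∈ Γ_c`, and linearity extends this to `𝕜𝒢`. Associativity is the substitution `k = g h`
in the double sum `Σ_h Σ_g f₁(g) f₂(h) • s(r g)·(g h)`, right multiplication by `h` being a
bijection `d⁻¹(r h) → d⁻¹(d h)`. For unitarity, ampleness puts the compact set `d(supp s)`
inside a compact open `U ⊆ 𝒢⁽⁰⁾`, and `s·χ_U` is `s` restricted to `U`.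
-/

open Function

theorem finsum_mem_eq_finsum_of_support_subset {α M : Type*} [AddCommMonoid M] {φ : α → M}
    {S : Set α} (h : support φ ⊆ S) : ∑ᶠ i ∈ S, φ i = ∑ᶠ i, φ i :=
  (finsum_mem_inter_support_eq' φ S univ fun _ hx => iff_of_true (h hx) trivial).trans
    (finsum_mem_univ φ)

namespace TopGroupoid

variable {Γ : Type} [TopologicalSpace Γ] (G : TopGroupoid Γ)

lemma d_d (g : Γ) : G.d (G.d g) = G.d g := by
  simpa only [G.mul_d] using (G.d_mul g (G.d g) (G.r_d g).symm).symm

lemma d_mem_units (g : Γ) : G.d g ∈ G.units := ⟨g, rfl⟩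

lemma r_mem_units (g : Γ) : G.r g ∈ G.units := ⟨G.inv g, G.d_inv g⟩

lemma d_eq_self_of_mem_units {x : Γ} (hx : x ∈ G.units) : G.d x = x := by
  obtain ⟨g, rfl⟩ := hx
  exact G.d_d g

lemma r_eq_self_of_mem_units {x : Γ} (hx : x ∈ G.units) : G.r x = x := by
  obtain ⟨g, rfl⟩ := hx
  exact G.r_d g

lemma d_mul_inv {h k : Γ} (hk : G.d k = G.d h) : G.d (G.mul k (G.inv h)) = G.r h := by
  rw [G.d_mul _ _ (by rw [G.r_inv, hk]), G.d_inv]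

lemma mul_inv_mul_cancel {h k : Γ} (hk : G.d k = G.d h) :
    G.mul (G.mul k (G.inv h)) h = k := by
  rw [G.mul_assoc _ _ _ (by rw [G.r_inv, hk]) (G.d_inv h), G.inv_mul, ← hk, G.mul_d]

lemma mul_mul_inv_cancel {g h : Γ} (hg : G.d g = G.r h) :
    G.mul (G.mul g h) (G.inv h) = g := by
  rw [G.mul_assoc _ _ _ hg (G.r_inv h).symm, G.mul_inv, ← hg, G.mul_d]

lemma bijOn_mul_right (h : Γ) :
    BijOn (G.mul · h) {g | G.d g = G.r h} {k | G.d k = G.d h} :=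
  InvOn.bijOn ⟨fun _ hg => G.mul_mul_inv_cancel hg, fun _ hk => G.mul_inv_mul_cancel hk⟩
    (fun _ hg => G.d_mul _ _ hg) (fun _ hk => G.d_mul_inv hk)

lemma finsum_mem_comp_mul_right {M : Type*} [AddCommMonoid M] {φ : Γ → M} (h : Γ)
    (hφ : support φ ⊆ {k | G.d k = G.d h}) :
    ∑ᶠ g ∈ {g | G.d g = G.r h}, φ (G.mul g h) = ∑ᶠ k, φ k := by
  rw [finsum_mem_eq_of_bijOn _ (G.bijOn_mul_right h) fun _ _ => rfl,
    finsum_mem_eq_finsum_of_support_subset hφ]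

lemma isOpen_units (hE : G.Etale) : IsOpen G.units := by
  refine isOpen_iff_forall_mem_open.2 fun x hx => ?_
  obtain ⟨U, hxU, -, -, hUo, -⟩ := hE x
  exact ⟨G.d '' U, image_subset_iff.2 fun g _ => G.d_mem_units g, hUo,
    x, hxU, G.d_eq_self_of_mem_units hx⟩

lemma t2Space_units (hG : G.Ample) : T2Space G.units := by
  refine ⟨fun x y hxy => ?_⟩
  obtain ⟨U, V, hU, hV, hxU, hyV, hUV⟩ := hG.2.1 x y x.2 y.2 (Subtype.val_injective.ne hxy)
  refine ⟨_, _, hU.preimage continuous_subtype_val, hV.preimage continuous_subtype_val,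
    hxU, hyV, disjoint_left.2 fun z hzU hzV => ?_⟩
  have hz : (z : Γ) ∈ U ∩ V ∩ G.units := ⟨⟨hzU, hzV⟩, z.2⟩
  rwa [hUV] at hz

lemma exists_isOpen_disjoint_of_isCompact (hG : G.Ample) {K : Set Γ} (hK : IsCompact K)
    (hKu : K ⊆ G.units) {x : Γ} (hx : x ∈ G.units) (hxK : x ∉ K) :
    ∃ V, IsOpen V ∧ x ∈ V ∧ Disjoint V K := by
  have := G.t2Space_units hG
  have hK' : IsCompact ((↑) ⁻¹' K : Set G.units) := by
    rwa [Subtype.isCompact_iff, Subtype.image_preimage_coe, inter_eq_right.2 hKu]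
  obtain ⟨V, hV, hVK⟩ := isOpen_induced_iff.1 hK'.isClosed.isOpen_compl
  refine ⟨V, hV, ?_, disjoint_left.2 fun z hzV hzK => ?_⟩
  · change (⟨x, hx⟩ : G.units) ∈ (↑) ⁻¹' V
    rw [hVK]
    exact hxK
  · have hz : (⟨z, hKu hzK⟩ : G.units) ∈ (↑) ⁻¹' V := hzV
    rw [hVK] at hz
    exact hz hzK

lemma exists_isCompact_isOpen_superset (hG : G.Ample) {K : Set Γ} (hK : IsCompact K)
    (hKu : K ⊆ G.units) : ∃ U ⊆ G.units, IsOpen U ∧ IsCompact U ∧ K ⊆ U := by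
  have hbasis : ∀ x ∈ K, ∃ C ⊆ G.units, x ∈ C ∧ IsOpen C ∧ IsCompact C := fun x hx => by
    obtain ⟨C, hCu, hxC, -, hCo, hCc⟩ :=
      hG.2.2 x (hKu hx) G.units (G.isOpen_units hG.1) (hKu hx)
    exact ⟨C, hCu, hxC, hCo, hCc⟩
  choose C hCu hxC hCo hCc using hbasis
  obtain ⟨t, ht⟩ := hK.elim_nhds_subcover' C fun x hx => (hCo x hx).mem_nhds (hxC x hx)
  exact ⟨⋃ x ∈ t, C x x.2, iUnion₂_subset fun x _ => hCu x x.2,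
    isOpen_biUnion fun x _ => hCo x x.2, t.isCompact_biUnion fun x _ => hCc x x.2, ht⟩

lemma IsPartialHomeoOn.continuousOn_invFunOn [Nonempty Γ] {f : Γ → Γ} {U : Set Γ}
    (hf : IsPartialHomeoOn f U) (hU : IsOpen U) : ContinuousOn (invFunOn f U) (f '' U) := by
  obtain ⟨hinj, himg, hopen⟩ := hf
  refine (continuousOn_open_iff himg).2 fun t ht => ?_
  rw [inter_comm, ← hinj.leftInvOn_invFunOn.image_inter']
  exact hopen _ inter_subset_right (ht.inter hU)

variable (𝕜 : Type*) [Semiring 𝕜]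

/-- Functions with finitely many nonzero values on each `d`-fibre: for these the `finsum`s in
`actSec` and `conv` are genuine finite sums rather than the junk value `0`. -/
def fiberwiseFinite : Submodule 𝕜 (Γ → 𝕜) where
  carrier := {f | ∀ x, ({g | G.d g = x} ∩ support f).Finite}
  add_mem' {f₁ f₂} hf₁ hf₂ x := ((hf₁ x).union (hf₂ x)).subset <| by
    rw [← inter_union_distrib_left]
    exact inter_subset_inter_right _ (support_add f₁ f₂)
  zero_mem' x := by simp
  smul_mem' c f hf x := (hf x).subset (inter_subset_inter_right _ (support_const_smul_subset c f))

variable {G 𝕜}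

lemma finite_fiber_inter_support_comp_mul_inv {f : Γ → 𝕜} (hf : f ∈ G.fiberwiseFinite 𝕜)
    (h : Γ) : ({k | G.d k = G.d h} ∩ support fun k => f (G.mul k (G.inv h))).Finite :=
  ((hf (G.r h)).image (G.mul · h)).subset fun k ⟨hk, hfk⟩ =>
    ⟨G.mul k (G.inv h), ⟨G.d_mul_inv hk, hfk⟩, G.mul_inv_mul_cancel hk⟩

lemma chi_mem_fiberwiseFinite {𝕜 : Type} [CommRing 𝕜] {U : Set Γ} (hU : InjOn G.d U) :
    chi 𝕜 U ∈ G.fiberwiseFinite 𝕜 := fun _ =>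
  Subsingleton.finite fun _ ⟨hg, hgU⟩ _ ⟨hg', hgU'⟩ =>
    hU (mem_of_indicator_ne_zero hgU) (mem_of_indicator_ne_zero hgU') (hg.trans hg'.symm)

lemma grpAlg_le_fiberwiseFinite {𝕜 : Type} [CommRing 𝕜] : G.grpAlg 𝕜 ≤ G.fiberwiseFinite 𝕜 :=
  Submodule.span_le.2 fun _ ⟨_, hU, _, hf⟩ => hf ▸ chi_mem_fiberwiseFinite hU.2.1.1

end TopGroupoid

namespace GSheafMod

open TopGroupoid

variable {Γ : Type} [TopologicalSpace Γ] {G : TopGroupoid Γ}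
  {𝕜 : Type} [CommRing 𝕜] (F : GSheafMod G 𝕜)

def transport {a b : Γ} (e : a = b) : F.stalk a →ₗ[𝕜] F.stalk b where
  toFun := cast (congrArg F.stalk e)
  map_add' := by subst e; exact fun _ _ => rfl
  map_smul' := by subst e; exact fun _ _ => rfl

lemma transport_apply_eq_iff_heq {a b : Γ} (e : a = b) (v : F.stalk a) (w : F.stalk b) :
    F.transport e v = w ↔ HEq v w :=
  cast_eq_iff_heq

def actₗ (g : Γ) : F.stalk (G.r g) →ₗ[𝕜] F.stalk (G.d g) where
  toFun := F.act g
  map_add' := F.act_add g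
  map_smul' := F.act_smul g

/-- The vector `s(r g)·g` of the paper, viewed in the stalk over `x`: it is `0` unless
`d g = x`, which makes the summand of `actSec` a non-dependent function of `g`. -/
noncomputable def translate (s : ∀ x, F.stalk x) (x g : Γ) : F.stalk x :=
  open Classical in
  if e : G.d g = x then F.transport e (F.act g (s (G.r g))) else 0

variable {F}

lemma translate_of_d_eq (s : ∀ x, F.stalk x) {x g : Γ} (e : G.d g = x) :
    F.translate s x g = F.transport e (F.act g (s (G.r g))) :=
  dif_pos e

lemma translate_of_d_ne (s : ∀ x, F.stalk x) {x g : Γ} (e : G.d g ≠ x) :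
    F.translate s x g = 0 :=
  dif_neg e

lemma sigma_mk_translate (s : ∀ x, F.stalk x) {x g : Γ} (e : G.d g = x) :
    (⟨x, F.translate s x g⟩ : Σ y, F.stalk y) = ⟨G.d g, F.act g (s (G.r g))⟩ := by
  subst e
  rw [translate_of_d_eq s rfl]
  rfl

lemma translate_add (s t : ∀ x, F.stalk x) (x g : Γ) :
    F.translate (s + t) x g = F.translate s x g + F.translate t x g := by
  by_cases e : G.d g = x
  · simp only [translate_of_d_eq _ e, Pi.add_apply, F.act_add, map_add]
  · simp only [translate_of_d_ne _ e, add_zero]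

lemma translate_smul (c : 𝕜) (s : ∀ x, F.stalk x) (x g : Γ) :
    F.translate (c • s) x g = c • F.translate s x g := by
  by_cases e : G.d g = x
  · simp only [translate_of_d_eq _ e, Pi.smul_apply, F.act_smul, map_smul]
  · simp only [translate_of_d_ne _ e, smul_zero]

lemma translate_self_of_mem_units (s : ∀ x, F.stalk x) {x : Γ} (hx : x ∈ G.units) :
    F.translate s x x = s x := by
  rw [translate_of_d_eq s (G.d_eq_self_of_mem_units hx), transport_apply_eq_iff_heq]
  exact (F.act_unit x hx _).trans (congr_arg_heq s (G.r_eq_self_of_mem_units hx))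

lemma transport_act_translate (s : ∀ x, F.stalk x) {g h x : Γ} (hg : G.d g = G.r h)
    (e : G.d h = x) :
    F.transport e (F.act h (F.translate s (G.r h) g)) = F.translate s x (G.mul g h) := by
  rw [translate_of_d_eq s hg, translate_of_d_eq s ((G.d_mul g h hg).trans e),
    transport_apply_eq_iff_heq]
  refine (F.act_comp g h hg _).trans ?_
  have hs : cast (congrArg F.stalk (G.r_mul g h hg)).symm (s (G.r g)) = s (G.r (G.mul g h)) :=
    cast_eq_iff_heq.2 (congr_arg_heq s (G.r_mul g h hg).symm)
  rw [hs]
  exact (cast_heq _ _).symm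

lemma support_smul_translate_subset (s : ∀ x, F.stalk x) (φ : Γ → 𝕜) (x : Γ) :
    support (fun g => φ g • F.translate s x g) ⊆ {g | G.d g = x} ∩ support φ :=
  fun _ hg => ⟨by_contra fun e => hg (by simp only [translate_of_d_ne s e, smul_zero]),
    fun h0 => hg (by simp only [h0, zero_smul])⟩

lemma actSec_eq_finsum (s : ∀ x, F.stalk x) (f : Γ → 𝕜) (x : Γ) :
    F.actSec s f x = ∑ᶠ g, f g • F.translate s x g := by
  rw [actSec, ← finsum_mem_eq_finsum_of_support_subset (S := {g | G.d g = x}),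
    ← finsum_set_coe_eq_finsum_mem]
  · exact finsum_congr fun g => by rw [translate_of_d_eq s g.2]; rfl
  · exact (support_smul_translate_subset s f x).trans inter_subset_left


lemma hasFiniteSupport_smul_translate {f : Γ → 𝕜} (hf : f ∈ G.fiberwiseFinite 𝕜)
    (s : ∀ x, F.stalk x) (x : Γ) : HasFiniteSupport fun g => f g • F.translate s x g :=
  (hf x).subset (support_smul_translate_subset s f x)

lemma actSec_add_left {f₁ f₂ : Γ → 𝕜} (hf₁ : f₁ ∈ G.fiberwiseFinite 𝕜)
    (hf₂ : f₂ ∈ G.fiberwiseFinite 𝕜) (s : ∀ x, F.stalk x) :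
    F.actSec s (f₁ + f₂) = F.actSec s f₁ + F.actSec s f₂ := by
  funext x
  simp only [Pi.add_apply, actSec_eq_finsum, add_smul]
  exact finsum_add_distrib (hasFiniteSupport_smul_translate hf₁ s x)
    (hasFiniteSupport_smul_translate hf₂ s x)

lemma actSec_smul_left {f : Γ → 𝕜} (hf : f ∈ G.fiberwiseFinite 𝕜) (c : 𝕜)
    (s : ∀ x, F.stalk x) : F.actSec s (c • f) = c • F.actSec s f := by
  funext x
  simp only [Pi.smul_apply, actSec_eq_finsum, smul_eq_mul, mul_smul]
  exact (smul_finsum' c (hasFiniteSupport_smul_translate hf s x)).symm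

lemma actSec_add_right {f : Γ → 𝕜} (hf : f ∈ G.fiberwiseFinite 𝕜) (s t : ∀ x, F.stalk x) :
    F.actSec (s + t) f = F.actSec s f + F.actSec t f := by
  funext x
  simp only [Pi.add_apply, actSec_eq_finsum, translate_add, smul_add]
  exact finsum_add_distrib (hasFiniteSupport_smul_translate hf s x)
    (hasFiniteSupport_smul_translate hf t x)

lemma actSec_smul_right {f : Γ → 𝕜} (hf : f ∈ G.fiberwiseFinite 𝕜) (c : 𝕜)
    (s : ∀ x, F.stalk x) : F.actSec (c • s) f = c • F.actSec s f := by
  funext x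
  simp only [Pi.smul_apply, actSec_eq_finsum, translate_smul, smul_comm (f _) c]
  exact (smul_finsum' c (hasFiniteSupport_smul_translate hf s x)).symm

lemma actSec_zero_left (s : ∀ x, F.stalk x) : F.actSec s (0 : Γ → 𝕜) = 0 := by
  funext x
  simp [actSec_eq_finsum]

lemma translate_actSec {f : Γ → 𝕜} (hf : f ∈ G.fiberwiseFinite 𝕜) (s : ∀ x, F.stalk x)
    {h x : Γ} (e : G.d h = x) :
    F.translate (F.actSec s f) x h = ∑ᶠ k, f (G.mul k (G.inv h)) • F.translate s x k := by
  let L := (F.transport e).comp (F.actₗ h)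
  calc F.translate (F.actSec s f) x h = L (∑ᶠ g, f g • F.translate s (G.r h) g) := by
        rw [translate_of_d_eq _ e, actSec_eq_finsum]
        rfl
    _ = ∑ᶠ g ∈ {g | G.d g = G.r h}, f g • F.translate s x (G.mul g h) := by
        rw [map_finsum L (hasFiniteSupport_smul_translate hf s (G.r h)),
          ← finsum_mem_eq_finsum_of_support_subset (S := {g | G.d g = G.r h})]
        · refine finsum_mem_congr rfl fun g hg => ?_
          rw [map_smul]
          exact congrArg (f g • ·) (transport_act_translate s hg e)
        · refine fun g hg => by_contra fun hn => hg ?_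
          simp only [translate_of_d_ne s hn, map_zero, smul_zero]
    _ = ∑ᶠ k, f (G.mul k (G.inv h)) • F.translate s x k := by
        refine Eq.trans ?_ (G.finsum_mem_comp_mul_right h ?_)
        · exact finsum_mem_congr rfl fun g hg => by simp only [G.mul_mul_inv_cancel hg]
        · exact (support_smul_translate_subset s _ x).trans fun k hk => hk.1.trans e.symm

lemma actSec_actSec {f₁ f₂ : Γ → 𝕜} (hf₁ : f₁ ∈ G.fiberwiseFinite 𝕜)
    (hf₂ : f₂ ∈ G.fiberwiseFinite 𝕜) (s : ∀ x, F.stalk x) :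
    F.actSec (F.actSec s f₁) f₂ = F.actSec s (G.conv f₁ f₂) := by
  funext x
  set A := (hf₂ x).toFinset
  have memA : ∀ {h}, h ∈ A ↔ G.d h = x ∧ f₂ h ≠ 0 := (hf₂ x).mem_toFinset
  have hfin : ∀ h ∈ A, HasFiniteSupport fun k => f₁ (G.mul k (G.inv h)) • F.translate s x k :=
    fun h hh => (finite_fiber_inter_support_comp_mul_inv hf₁ h).subset <| by
      rw [(memA.1 hh).1]
      exact support_smul_translate_subset s _ x
  have hconv : ∀ k, G.d k = x → G.conv f₁ f₂ k = ∑ h ∈ A, f₁ (G.mul k (G.inv h)) * f₂ h :=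
    fun k hk => finsum_mem_eq_sum_of_subset _
      (fun h ⟨hh, hne⟩ => memA.2 ⟨hh.trans hk, right_ne_zero_of_mul hne⟩)
      (fun h hh => (memA.1 hh).1.trans hk.symm)
  calc F.actSec (F.actSec s f₁) f₂ x
      = ∑ h ∈ A, f₂ h • F.translate (F.actSec s f₁) x h :=
        (actSec_eq_finsum _ f₂ x).trans (finsum_eq_sum_of_support_subset _ <| by
          rw [Finite.coe_toFinset]; exact support_smul_translate_subset _ f₂ x)
    _ = ∑ h ∈ A, ∑ᶠ k, f₂ h • f₁ (G.mul k (G.inv h)) • F.translate s x k :=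
        Finset.sum_congr rfl fun h hh => by
          rw [translate_actSec hf₁ s (memA.1 hh).1, smul_finsum' _ (hfin h hh)]
    _ = ∑ᶠ k, ∑ h ∈ A, f₂ h • f₁ (G.mul k (G.inv h)) • F.translate s x k :=
        (finsum_sum_comm A _ fun h hh =>
          (hfin h hh).subset (support_const_smul_subset (f₂ h) _)).symm
    _ = ∑ᶠ k, G.conv f₁ f₂ k • F.translate s x k := by
        refine finsum_congr fun k => ?_
        by_cases hk : G.d k = x
        · rw [hconv k hk, Finset.sum_smul]
          exact Finset.sum_congr rfl fun h _ => by rw [mul_comm, mul_smul]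
        · simp only [translate_of_d_ne s hk, smul_zero, Finset.sum_const_zero]
    _ = F.actSec s (G.conv f₁ f₂) x := (actSec_eq_finsum s _ x).symm

lemma actSec_chi_apply_of_mem (s : ∀ x, F.stalk x) {U : Set Γ} (hU : InjOn G.d U) {g x : Γ}
    (hg : g ∈ U) (e : G.d g = x) : F.actSec s (chi 𝕜 U) x = F.translate s x g := by
  rw [actSec_eq_finsum, finsum_eq_single _ g fun k hk => ?_, chi, indicator_of_mem hg,
    Pi.one_apply, one_smul]
  by_cases hkU : k ∈ U
  · rw [translate_of_d_ne s fun ek => hk (hU hkU hg (ek.trans e.symm)), smul_zero]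
  · rw [chi, indicator_of_notMem hkU, zero_smul]

lemma actSec_chi_apply_of_notMem_image (s : ∀ x, F.stalk x) {U : Set Γ} {x : Γ}
    (hx : x ∉ G.d '' U) : F.actSec s (chi 𝕜 U) x = 0 := by
  rw [actSec_eq_finsum]
  refine finsum_eq_zero_of_forall_eq_zero fun k => ?_
  by_cases hkU : k ∈ U
  · rw [translate_of_d_ne s fun ek => hx ⟨k, hkU, ek⟩, smul_zero]
  · rw [chi, indicator_of_notMem hkU, zero_smul]

variable (F)

lemma zero_mem_Γc : (0 : ∀ x, F.stalk x) ∈ F.Γc :=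
  ⟨fun _ _ => rfl, F.continuous_zero, ∅, isCompact_empty, fun _ hx => (hx rfl).elim⟩

lemma add_mem_Γc {s t : ∀ x, F.stalk x} (hs : s ∈ F.Γc) (ht : t ∈ F.Γc) : s + t ∈ F.Γc := by
  obtain ⟨hs0, hsc, Ks, hKs, hsK⟩ := hs
  obtain ⟨ht0, htc, Kt, hKt, htK⟩ := ht
  refine ⟨fun x hx => by rw [Pi.add_apply, hs0 x hx, ht0 x hx, add_zero], ?_,
    Ks ∪ Kt, hKs.union hKt, fun x hx => by_contra fun hxK => hx ?_⟩
  · have hpair : ContinuousOn (fun x => (⟨(⟨x, s x⟩, ⟨x, t x⟩), rfl⟩ :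
        {q : (Σ y, F.stalk y) × (Σ y, F.stalk y) // q.1.1 = q.2.1})) G.units :=
      Topology.IsEmbedding.subtypeVal.isInducing.continuousOn_iff.2 (hsc.prodMk htc)
    exact F.continuous_add.comp_continuousOn hpair
  · obtain ⟨hxs, hxt⟩ := not_or.1 hxK
    rw [Pi.add_apply, not_not.1 (mt (hsK x) hxs), not_not.1 (mt (htK x) hxt), add_zero]

lemma smul_mem_Γc (c : 𝕜) {s : ∀ x, F.stalk x} (hs : s ∈ F.Γc) : c • s ∈ F.Γc := by
  obtain ⟨hs0, hsc, K, hK, hsK⟩ := hs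
  exact ⟨fun x hx => by rw [Pi.smul_apply, hs0 x hx, smul_zero],
    (F.continuous_smul c).comp_continuousOn hsc, K, hK,
    fun x hx => hsK x fun h => hx (by rw [Pi.smul_apply, h, smul_zero])⟩

variable {F}

lemma continuous_sigma_act {s : ∀ x, F.stalk x}
    (hs : ContinuousOn (fun x => (⟨x, s x⟩ : Σ x, F.stalk x)) G.units) :
    Continuous fun g => (⟨G.d g, F.act g (s (G.r g))⟩ : Σ x, F.stalk x) := by
  have hpair : Continuous fun g => (⟨(⟨G.r g, s (G.r g)⟩, g), rfl⟩ :
      {q : (Σ x, F.stalk x) × Γ // q.1.1 = G.r q.2}) :=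
    ((hs.comp_continuous G.continuous_r G.r_mem_units).prodMk continuous_id).subtype_mk _
  exact F.continuous_act.comp hpair

lemma continuousOn_actSec_chi_image [Nonempty Γ] {s : ∀ x, F.stalk x}
    (hs : ContinuousOn (fun x => (⟨x, s x⟩ : Σ x, F.stalk x)) G.units) {U : Set Γ}
    (hU : G.IsBisection U) :
    ContinuousOn (fun x => (⟨x, F.actSec s (chi 𝕜 U) x⟩ : Σ x, F.stalk x)) (G.d '' U) := by
  refine ((continuous_sigma_act hs).comp_continuousOn
    (hU.2.1.continuousOn_invFunOn hU.1)).congr fun x hx => ?_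
  have hσ : G.d (invFunOn G.d U x) = x := invFunOn_eq hx
  simp only [comp_apply]
  rw [actSec_chi_apply_of_mem s hU.2.1.1 (invFunOn_mem hx) hσ, sigma_mk_translate s hσ]

lemma continuousOn_actSec_chi (hG : G.Ample) {s : ∀ x, F.stalk x}
    (hs : ContinuousOn (fun x => (⟨x, s x⟩ : Σ x, F.stalk x)) G.units) {U : Set Γ}
    (hU : G.IsBisection U) (hUc : IsCompact U) :
    ContinuousOn (fun x => (⟨x, F.actSec s (chi 𝕜 U) x⟩ : Σ x, F.stalk x)) G.units := by
  refine continuousOn_of_locally_continuousOn fun x hx => ?_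
  by_cases hxD : x ∈ G.d '' U
  · have : Nonempty Γ := ⟨x⟩
    exact ⟨G.d '' U, hU.2.1.2.1, hxD,
      (continuousOn_actSec_chi_image hs hU).mono inter_subset_right⟩
  · obtain ⟨V, hVo, hxV, hVD⟩ := G.exists_isOpen_disjoint_of_isCompact hG
      (hUc.image G.continuous_d) (image_subset_iff.2 fun g _ => G.d_mem_units g) hx hxD
    refine ⟨V, hVo, hxV, (F.continuous_zero.mono inter_subset_left).congr fun y hy => ?_⟩
    rw [actSec_chi_apply_of_notMem_image s (disjoint_left.1 hVD hy.2)]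

lemma actSec_chi_mem_Γc (hG : G.Ample) {s : ∀ x, F.stalk x} (hs : s ∈ F.Γc) {U : Set Γ}
    (hU : G.IsBisection U) (hUc : IsCompact U) : F.actSec s (chi 𝕜 U) ∈ F.Γc :=
  ⟨fun x hx => F.trivial_off_units x hx _, continuousOn_actSec_chi hG hs.2.1 hU hUc,
    G.d '' U, hUc.image G.continuous_d,
    fun _ hx => by_contra fun hxD => hx (actSec_chi_apply_of_notMem_image s hxD)⟩

lemma actSec_mem_Γc (hG : G.Ample) {s : ∀ x, F.stalk x} (hs : s ∈ F.Γc) {f : Γ → 𝕜}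
    (hf : f ∈ G.grpAlg 𝕜) : F.actSec s f ∈ F.Γc := by
  induction hf using Submodule.span_induction with
  | mem f hf =>
    obtain ⟨U, hU, hUc, rfl⟩ := hf
    exact actSec_chi_mem_Γc hG hs hU hUc
  | zero => simpa only [actSec_zero_left] using F.zero_mem_Γc
  | add f₁ f₂ hf₁ hf₂ ih₁ ih₂ =>
    rw [actSec_add_left (grpAlg_le_fiberwiseFinite hf₁) (grpAlg_le_fiberwiseFinite hf₂)]
    exact F.add_mem_Γc ih₁ ih₂
  | smul c f hf ih =>
    rw [actSec_smul_left (grpAlg_le_fiberwiseFinite hf)]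
    exact F.smul_mem_Γc c ih

lemma exists_actSec_chi_eq_self (hG : G.Ample) {s : ∀ x, F.stalk x} (hs : s ∈ F.Γc) :
    ∃ U ⊆ G.units, IsOpen U ∧ IsCompact U ∧ F.actSec s (chi 𝕜 U) = s := by
  obtain ⟨hs0, -, K, hK, hsK⟩ := hs
  obtain ⟨U, hUu, hUo, hUc, hKU⟩ := G.exists_isCompact_isOpen_superset hG
    (hK.image G.continuous_d) (image_subset_iff.2 fun g _ => G.d_mem_units g)
  have hdU : ∀ {g}, g ∈ U → G.d g = g := fun hg => G.d_eq_self_of_mem_units (hUu hg)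
  refine ⟨U, hUu, hUo, hUc, funext fun x => ?_⟩
  by_cases hxU : x ∈ U
  · rw [actSec_chi_apply_of_mem s (fun a ha b hb e => by rwa [hdU ha, hdU hb] at e) hxU
      (hdU hxU), translate_self_of_mem_units s (hUu hxU)]
  · rw [actSec_chi_apply_of_notMem_image s fun ⟨g, hg, hgx⟩ => hxU (hgx ▸ (hdU hg).symm ▸ hg)]
    by_contra hne
    have hx : x ∈ G.units := by_contra fun hx => hne (hs0 x hx).symm
    exact hxU (hKU ⟨x, hsK x (Ne.symm hne), G.d_eq_self_of_mem_units hx⟩)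

end GSheafMod

open TopGroupoid in
/-- For a `𝒢`-sheaf of `𝕜`-modules `(E,p)` over an ample groupoid,
the compactly supported continuous global sections `Γ_c(E,p)`, with pointwise
addition and the action `(s·f)(x) = Σ_{d(g)=x} f(g)•(s(r(g))·g)`, form a unitary
right `𝕜𝒢`-module. -/
theorem sections_form_unitary_module {Γ : Type} [TopologicalSpace Γ]
    (G : TopGroupoid Γ) (hG : G.Ample) (𝕜 : Type) [CommRing 𝕜]
    (F : GSheafMod G 𝕜) :
    -- the action preserves compactly supported continuous sections
    (∀ s ∈ F.Γc, ∀ f ∈ G.grpAlg 𝕜, F.actSec s f ∈ F.Γc) ∧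
    -- Γ_c is closed under pointwise addition and the action is biadditive
    (∀ s ∈ F.Γc, ∀ t ∈ F.Γc, s + t ∈ F.Γc ∧
      ∀ f ∈ G.grpAlg 𝕜, F.actSec (s + t) f = F.actSec s f + F.actSec t f) ∧
    (∀ s ∈ F.Γc, ∀ f₁ ∈ G.grpAlg 𝕜, ∀ f₂ ∈ G.grpAlg 𝕜,
      F.actSec s (f₁ + f₂) = F.actSec s f₁ + F.actSec s f₂) ∧
    -- 𝕜-bilinearity
    (∀ (c : 𝕜), ∀ s ∈ F.Γc, ∀ f ∈ G.grpAlg 𝕜,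
      F.actSec s (c • f) = c • F.actSec s f ∧
      F.actSec (c • s) f = c • F.actSec s f) ∧
    -- associativity with respect to convolution
    (∀ s ∈ F.Γc, ∀ f₁ ∈ G.grpAlg 𝕜, ∀ f₂ ∈ G.grpAlg 𝕜,
      F.actSec (F.actSec s f₁) f₂ = F.actSec s (G.conv f₁ f₂)) ∧
    -- the module is unitary
    (∀ s ∈ F.Γc, ∃ U : Set Γ, U ⊆ G.units ∧ IsOpen U ∧ IsCompact U ∧
      F.actSec s (chi 𝕜 U) = s) := by
  have hfin : ∀ {f}, f ∈ G.grpAlg 𝕜 → f ∈ G.fiberwiseFinite 𝕜 :=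
    fun hf => grpAlg_le_fiberwiseFinite hf
  exact ⟨fun s hs f hf => GSheafMod.actSec_mem_Γc hG hs hf,
    fun s hs t ht => ⟨F.add_mem_Γc hs ht, fun f hf => GSheafMod.actSec_add_right (hfin hf) s t⟩,
    fun s _ f₁ hf₁ f₂ hf₂ => GSheafMod.actSec_add_left (hfin hf₁) (hfin hf₂) s,
    fun c s _ f hf => ⟨GSheafMod.actSec_smul_left (hfin hf) c s,
      GSheafMod.actSec_smul_right (hfin hf) c s⟩,
    fun s _ f₁ hf₁ f₂ hf₂ => GSheafMod.actSec_actSec (hfin hf₁) (hfin hf₂) s,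
    fun s hs => GSheafMod.exists_actSec_chi_eq_self hG hs⟩
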